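/- Let p ≥ 2 be an integer, let Ê be a finite set, let T ≥ 1 be an integer, and let f^{(0)}, …, f^{(T)} : Ê → (0,∞) be a sequence of vectors with f^{(0)}_e = 1 for all e ∈ Ê. Define weights w^{(t)}_e = W_p(f^{(t)}_e), and assume that for every 0 ≤ t < T one has ∑_{e∈Ê} w^{(t)}_e·|f^{(t+1)}_e − f^{(t)}_e| ≤ 1/(100p). Let K > 4 and let F ⊆ Ê be the set of e ∈ Ê such that w^{(t)}_e ≥ K for some 0 ≤ t ≤ T. Then |F| ≤ T·K^{−p/(p+1)}. -/
import Mathlib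


/-- The weight function `W_p`: `W_p(x) = x^{-(p+1)}` for `x ≤ 1`, `W_p(x) = 1/x` for `x ≥ 1`. -/
noncomputable def barrierW (p : ℕ) (x : ℝ) : ℝ :=
  if x ≤ 1 then x ^ (-(p : ℤ) - 1) else 1 / x

noncomputable def Phi (p : ℕ) (x : ℝ) : ℝ := ((min x 1) ^ p)⁻¹

lemma barrierW_pos (p : ℕ) {x : ℝ} (hx : 0 < x) : 0 < barrierW p x := by
  unfold barrierW; split
  · exact zpow_pos hx _
  · positivity

lemma barrierW_eq_of_le_one (p : ℕ) {x : ℝ} (hx : 0 < x) (h1 : x ≤ 1) :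
    barrierW p x = (x ^ (p+1))⁻¹ := by
  rw [barrierW, if_pos h1, ← zpow_natCast x (p+1), ← zpow_neg]
  congr 1; push_cast; ring

lemma Phi_one (p : ℕ) : Phi p 1 = 1 := by simp [Phi]

lemma Phi_anti (p : ℕ) {x y : ℝ} (hx : 0 < x) (hxy : x ≤ y) : Phi p y ≤ Phi p x := by
  have h1 : 0 < min x 1 := lt_min hx one_pos
  have h2 : min x 1 ≤ min y 1 := min_le_min hxy le_rfl
  exact inv_anti₀ (pow_pos h1 p) (pow_le_pow_left₀ h1.le h2 p)

lemma pow_succ_sub_pow_succ_le {a b : ℝ} (hb : 0 ≤ b) (hba : b ≤ a) (n : ℕ) :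
    a ^ (n+1) - b ^ (n+1) ≤ ((n:ℝ)+1) * a ^ n * (a - b) := by
  have ha : 0 ≤ a := hb.trans hba
  induction n with
  | zero => simp
  | succ n ih =>
      have h2 : b ^ (n+1) ≤ a ^ (n+1) := pow_le_pow_left₀ hb hba _
      have h3 : 0 ≤ a ^ n := pow_nonneg ha n
      calc a ^ (n+1+1) - b ^ (n+1+1)
          = a * (a^(n+1) - b^(n+1)) + b^(n+1) * (a-b) := by ring
        _ ≤ a * (((n:ℝ)+1) * a^n * (a-b)) + a^(n+1) * (a-b) :=
            add_le_add (mul_le_mul_of_nonneg_left ih ha)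
              (mul_le_mul_of_nonneg_right h2 (sub_nonneg.2 hba))
        _ = (((n+1:ℕ):ℝ)+1) * a^(n+1) * (a-b) := by push_cast; ring

lemma Phi_step (p : ℕ) (hp : 2 ≤ p) {a b : ℝ} (ha : 0 < a) (hb : 0 < b)
    (hsmall : barrierW p a * |b - a| ≤ 1 / (100 * p)) :
    Phi p b - Phi p a ≤ 2 * p * (barrierW p a * |b - a|) := by
  have hp0 : (0:ℝ) < p := by positivity
  have hW : 0 < barrierW p a := barrierW_pos p ha
  have hRHS : 0 ≤ 2 * p * (barrierW p a * |b - a|) := by positivity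
  rcases le_or_gt a b with hab | hab
  · linarith [Phi_anti p ha hab]
  rcases le_or_gt 1 b with hb1 | hb1
  · have h1 : Phi p b = 1 := by rw [Phi, min_eq_right hb1]; simp
    have h2 : Phi p a = 1 := by rw [Phi, min_eq_right (hb1.trans hab.le)]; simp
    rw [h1, h2]; simpa using hRHS
  have habs : |b - a| = a - b := by rw [abs_of_neg (by linarith)]; ring
  rw [habs] at hsmall ⊢
  obtain ⟨q, hq⟩ : ∃ q, p = q + 1 := ⟨p - 1, by omega⟩
  set δ : ℝ := 1 / (100 * p) with hδ
  have hδpos : 0 < δ := by positivity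
  have hδle : δ ≤ 1 / 200 := by
    rw [hδ]
    rw [div_le_div_iff₀ (by positivity) (by norm_num)]
    have : (2:ℝ) ≤ p := by exact_mod_cast hp
    linarith
  -- b ≥ a (1 - δ)
  have hblb : a * (1 - δ) ≤ b := by
    have key : a - b ≤ δ * a := by
      rcases le_or_gt a 1 with ha1 | ha1
      · rw [barrierW_eq_of_le_one p ha ha1] at hsmall
        have h3 : a⁻¹ ≤ (a ^ (p+1))⁻¹ := by
          apply inv_anti₀ (pow_pos ha _)
          calc a^(p+1) ≤ a^1 := pow_le_pow_of_le_one ha.le ha1 (by omega)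
            _ = a := pow_one a
        have h4 : a⁻¹ * (a - b) ≤ δ :=
          le_trans (mul_le_mul_of_nonneg_right h3 (by linarith)) hsmall
        rw [inv_mul_le_iff₀ ha] at h4
        linarith [h4]
      · rw [barrierW, if_neg (not_le.2 ha1)] at hsmall
        rw [div_mul_eq_mul_div, div_le_iff₀ ha, one_mul] at hsmall
        linarith [hsmall]
    nlinarith [key]
  -- Bernoulli
  have hbern : (1:ℝ)/2 ≤ (1 - δ)^p := by
    have h := one_add_mul_le_pow (a := -δ) (by linarith) p
    have hpδ : (p:ℝ) * δ = 1/100 := by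
      rw [hδ]; field_simp
    calc (1:ℝ)/2 ≤ 1 + (p:ℝ) * (-δ) := by
          have : (p:ℝ) * -δ = -(1/100) := by rw [mul_neg, hpδ]
          rw [this]; norm_num
      _ ≤ (1 + -δ)^p := h
      _ = (1-δ)^p := by ring_nf
  have hkey : a ^ p ≤ 2 * b ^ p := by
    have h0 : 0 ≤ a * (1-δ) := by nlinarith
    have h1 : (a*(1-δ))^p ≤ b^p := pow_le_pow_left₀ h0 hblb p
    have h2 : (a*(1-δ))^p = a^p * (1-δ)^p := mul_pow a _ p
    nlinarith [pow_nonneg ha.le p, mul_le_mul_of_nonneg_left hbern (pow_nonneg ha.le p)]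
  have hBb : min b 1 = b := min_eq_left hb1.le
  set A := min a 1 with hA
  have hA0 : 0 < A := lt_min ha one_pos
  have hA1 : A ≤ 1 := min_le_right _ _
  have hbA : b ≤ A := le_min hab.le hb1.le
  have hAa : A ≤ a := min_le_left _ _
  have h3 : ((p:ℝ)) = (q:ℝ)+1 := by rw [hq]; push_cast; ring
  have hnum : A^p - b^p ≤ (p:ℝ) * A^q * (a - b) := by
    calc A^p - b^p = A^(q+1) - b^(q+1) := by rw [hq]
      _ ≤ ((q:ℝ)+1) * A^q * (A - b) := pow_succ_sub_pow_succ_le hb.le hbA q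
      _ ≤ ((q:ℝ)+1) * A^q * (a - b) := by
          apply mul_le_mul_of_nonneg_left (by linarith) (by positivity)
      _ = (p:ℝ) * A^q * (a - b) := by rw [h3]
  have hPhib : Phi p b = (b^p)⁻¹ := by rw [Phi, hBb]
  have hPhia : Phi p a = (A^p)⁻¹ := rfl
  rw [hPhib, hPhia]
  have hab' : 0 ≤ a - b := by linarith
  rcases le_or_gt a 1 with ha1 | ha1
  · -- A = a
    have hAe : A = a := min_eq_left ha1
    rw [barrierW_eq_of_le_one p ha ha1, hAe]
    have hform : (b^p)⁻¹ - (a^p)⁻¹ = (a^p - b^p) / (a^p * b^p) := by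
      field_simp
    rw [hAe] at hnum
    have hr : 2 * (p:ℝ) * ((a ^ (p+1))⁻¹ * (a - b)) = 2 * p * (a-b) / a^(p+1) := by
      ring
    rw [hform, hr, div_le_div_iff₀ (by positivity) (by positivity)]
    calc (a^p - b^p) * a^(p+1)
        ≤ ((p:ℝ) * a^q * (a-b)) * a^(p+1) :=
          mul_le_mul_of_nonneg_right hnum (by positivity)
      _ = (p:ℝ)*(a-b) * (a^p * a^p) := by rw [hq]; push_cast; ring
      _ ≤ (p:ℝ)*(a-b) * (a^p * (2*b^p)) := by
          apply mul_le_mul_of_nonneg_left _ (by positivity)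
          exact mul_le_mul_of_nonneg_left hkey (by positivity)
      _ = 2 * (p:ℝ) * (a-b) * (a^p * b^p) := by ring
  · -- A = 1
    have hAe : A = 1 := min_eq_right ha1.le
    rw [barrierW, if_neg (not_le.2 ha1)]
    rw [hAe]
    rw [hAe] at hnum
    simp only [one_pow, inv_one, one_mul, mul_one] at hnum ⊢
    have hkey2 : a ≤ 2 * b ^ p :=
      le_trans (le_self_pow₀ ha1.le (by omega)) hkey
    have hform : (b^p)⁻¹ - 1 = (1 - b^p) / b^p := by field_simp
    have hr : 2 * (p:ℝ) * (1 / a * (a - b)) = 2 * p * (a-b) / a := by ring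
    rw [hform, hr, div_le_div_iff₀ (by positivity) ha]
    calc (1 - b^p) * a ≤ ((p:ℝ) * (a-b)) * a :=
          mul_le_mul_of_nonneg_right hnum ha.le
      _ ≤ (p:ℝ)*(a-b) * (2*b^p) := by
          apply mul_le_mul_of_nonneg_left hkey2 (by positivity)
      _ = 2 * (p:ℝ) * (a-b) * b^p := by ring

lemma Phi_ge_of_barrierW_ge (p : ℕ) (hp : 1 ≤ p) {b K : ℝ} (hb : 0 < b) (hK : 1 < K)
    (h : K ≤ barrierW p b) : K ^ ((p:ℝ)/((p:ℝ)+1)) ≤ Phi p b := by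
  have hK0 : (0:ℝ) < K := lt_trans one_pos hK
  have hb1 : b ≤ 1 := by
    by_contra h'
    push_neg at h'
    rw [barrierW, if_neg (not_le.2 h')] at h
    have : 1 / b < 1 := by rw [div_lt_one (by linarith)]; exact h'
    linarith
  rw [barrierW_eq_of_le_one p hb hb1] at h
  have hPhi : Phi p b = (b^p)⁻¹ := by rw [Phi, min_eq_left hb1]
  have hPhipos : (0:ℝ) < (b^p)⁻¹ := by positivity
  have hpow : K ^ p ≤ ((b^p)⁻¹)^(p+1) := by
    have he : ((b^p)⁻¹)^(p+1) = ((b^(p+1))⁻¹)^p := by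
      rw [← inv_pow, ← inv_pow, ← pow_mul, ← pow_mul, Nat.mul_comm]
    rw [he]
    exact pow_le_pow_left₀ hK0.le h p
  rw [hPhi]
  have h1 : K ^ ((p:ℝ)/((p:ℝ)+1)) = (K ^ (p:ℕ) : ℝ) ^ ((1:ℝ)/((p:ℝ)+1)) := by
    rw [← Real.rpow_natCast K p, ← Real.rpow_mul hK0.le]
    congr 1; ring
  have h2 : ((b^p)⁻¹) = (((b^p)⁻¹) ^ (p+1:ℕ)) ^ ((1:ℝ)/((p:ℝ)+1)) := by
    rw [← Real.rpow_natCast ((b^p)⁻¹) (p+1), ← Real.rpow_mul hPhipos.le]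
    have : ((p+1:ℕ):ℝ) * (1/((p:ℝ)+1)) = 1 := by
      push_cast
      field_simp
    rw [this, Real.rpow_one]
  rw [h1, h2]
  exact Real.rpow_le_rpow (by positivity) hpow (by positivity)

/-- Lemma `hechange`: if a sequence of positive flows on `Ehat` starts at `1`
on every edge and each step has weighted `ℓ₁`-movement at most `1/(100p)`, then the number of
edges whose weight ever reaches `K > 4` is at most `T·K^{-p/(p+1)}`. -/
theorem few_heavy_edges {Ehat : Type*} [Fintype Ehat]
    (p : ℕ) (hp : 2 ≤ p) (T : ℕ) (hT : 1 ≤ T)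
    (f : Fin (T + 1) → Ehat → ℝ) (hpos : ∀ t e, 0 < f t e)
    (h0 : ∀ e, f 0 e = 1)
    (hstep : ∀ t : Fin T,
      ∑ e, barrierW p (f t.castSucc e) * |f t.succ e - f t.castSucc e| ≤ 1 / (100 * p))
    (K : ℝ) (hK : 4 < K)
    (F : Finset Ehat) (hF : ∀ e, e ∈ F ↔ ∃ t, K ≤ barrierW p (f t e)) :
    (F.card : ℝ) ≤ (T : ℝ) * K ^ (-(p : ℝ) / ((p : ℝ) + 1)) := by
  classical
  have hp0 : (0:ℝ) < p := by exact_mod_cast (by omega : 0 < p)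
  have hK0 : (0:ℝ) < K := by linarith
  have hK1 : (1:ℝ) < K := by linarith
  set x : ℝ := K ^ ((p:ℝ)/((p:ℝ)+1)) with hxdef
  have hx2 : (2:ℝ) ≤ x := by
    have e1 : (2:ℝ) ≤ (4:ℝ) ^ ((2:ℝ)/3) := by
      have hc : ((4:ℝ) ^ ((2:ℝ)/3))^(3:ℕ) = 16 := by
        rw [← Real.rpow_natCast ((4:ℝ)^((2:ℝ)/3)) 3, ← Real.rpow_mul (by norm_num)]
        norm_num
      nlinarith [Real.rpow_nonneg (by norm_num : (0:ℝ) ≤ 4) ((2:ℝ)/3),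
        sq_nonneg ((4:ℝ) ^ ((2:ℝ)/3) - 2), sq_nonneg ((4:ℝ) ^ ((2:ℝ)/3) + 2)]
    have e2 : (4:ℝ) ^ ((2:ℝ)/3) ≤ K ^ ((2:ℝ)/3) :=
      Real.rpow_le_rpow (by norm_num) hK.le (by norm_num)
    have e3 : K ^ ((2:ℝ)/3) ≤ x := by
      apply Real.rpow_le_rpow_of_exponent_le hK1.le
      rw [div_le_div_iff₀ (by norm_num) (by positivity)]
      have h2p : (2:ℝ) ≤ p := by exact_mod_cast hp
      linarith
    linarith
  have hterm_nonneg : ∀ (t : Fin T) (e : Ehat),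
      0 ≤ barrierW p (f t.castSucc e) * |f t.succ e - f t.castSucc e| := fun t e =>
    mul_nonneg (barrierW_pos p (hpos _ e)).le (abs_nonneg _)
  set c : Ehat → ℝ := fun e => ∑ t : Fin T,
      barrierW p (f t.castSucc e) * |f t.succ e - f t.castSucc e| with hcdef
  have hc_nonneg : ∀ e, 0 ≤ c e := fun e => Finset.sum_nonneg fun t _ => hterm_nonneg t e
  have htot : ∑ e, c e ≤ T * (1/(100*p)) := by
    rw [hcdef, Finset.sum_comm]
    calc ∑ t : Fin T, ∑ e, barrierW p (f t.castSucc e) * |f t.succ e - f t.castSucc e|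
        ≤ ∑ _t : Fin T, 1/(100*(p:ℝ)) := Finset.sum_le_sum (fun t _ => hstep t)
      _ = T * (1/(100*p)) := by
          rw [Finset.sum_const, Finset.card_univ, Fintype.card_fin, nsmul_eq_mul]
  have htel : ∀ e (s : Fin (T+1)), Phi p (f s e) ≤ 1 + 2*(p:ℝ) * c e := by
    intro e s
    set w : ℕ → ℝ := fun n =>
      if h : n < T then
        barrierW p (f ⟨n, Nat.lt_succ_of_lt h⟩ e) *
          |f ⟨n+1, Nat.succ_lt_succ h⟩ e - f ⟨n, Nat.lt_succ_of_lt h⟩ e|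
      else 0 with hwdef
    have hw_nonneg : ∀ n, 0 ≤ w n := by
      intro n
      rw [hwdef]
      dsimp only
      split
      · exact mul_nonneg (barrierW_pos p (hpos _ e)).le (abs_nonneg _)
      · exact le_refl 0
    have hwc : ∑ t ∈ Finset.range T, w t = c e := by
      rw [← Fin.sum_univ_eq_sum_range w T, hcdef]
      apply Finset.sum_congr rfl
      intro t _
      rw [hwdef]
      simp only [dif_pos t.isLt]
      rfl
    have hwsmall : ∀ n (hn : n < T), w n ≤ 1/(100*(p:ℝ)) := by
      intro n hn
      have h1 := hstep ⟨n, hn⟩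
      have h2 : w n ≤ ∑ e', barrierW p (f (Fin.castSucc ⟨n, hn⟩) e') *
          |f (Fin.succ ⟨n, hn⟩) e' - f (Fin.castSucc ⟨n, hn⟩) e'| := by
        rw [hwdef]
        simp only [dif_pos hn]
        exact Finset.single_le_sum (fun e' _ => hterm_nonneg ⟨n, hn⟩ e') (Finset.mem_univ e)
      exact h2.trans h1
    have key : ∀ n (hn : n < T+1),
        Phi p (f ⟨n, hn⟩ e) ≤ 1 + 2*(p:ℝ) * ∑ t ∈ Finset.range n, w t := by
      intro n
      induction n with
      | zero =>
          intro hn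
          have h00 : (⟨0, hn⟩ : Fin (T+1)) = 0 := rfl
          rw [h00, h0 e, Phi_one]
          simp
      | succ n ih =>
          intro hn
          have hnT : n < T := by omega
          have hwn : w n = barrierW p (f ⟨n, Nat.lt_succ_of_lt hnT⟩ e) *
              |f ⟨n+1, hn⟩ e - f ⟨n, Nat.lt_succ_of_lt hnT⟩ e| := by
            rw [hwdef]; simp only [dif_pos hnT]
          have hstep1 : Phi p (f ⟨n+1, hn⟩ e) - Phi p (f ⟨n, Nat.lt_succ_of_lt hnT⟩ e)
              ≤ 2*(p:ℝ) * (w n) := by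
            rw [hwn]
            exact Phi_step p hp (hpos _ e) (hpos _ e) (by rw [← hwn]; exact hwsmall n hnT)
          have ih' := ih (Nat.lt_succ_of_lt hnT)
          rw [Finset.sum_range_succ, mul_add]
          linarith
    calc Phi p (f s e) = Phi p (f ⟨s.1, s.2⟩ e) := rfl
      _ ≤ 1 + 2*(p:ℝ) * ∑ t ∈ Finset.range s.1, w t := key s.1 s.2
      _ ≤ 1 + 2*(p:ℝ) * ∑ t ∈ Finset.range T, w t := by
          have hsub : Finset.range s.1 ⊆ Finset.range T :=
            Finset.range_subset_range.2 (by omega)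
          have := Finset.sum_le_sum_of_subset_of_nonneg hsub (fun t _ _ => hw_nonneg t)
          nlinarith [this]
      _ = 1 + 2*(p:ℝ) * c e := by rw [hwc]
  have hheavy : ∀ e ∈ F, (x - 1)/(2*(p:ℝ)) ≤ c e := by
    intro e he
    obtain ⟨t, ht⟩ := (hF e).1 he
    have h1 : x ≤ Phi p (f t e) :=
      Phi_ge_of_barrierW_ge p (by omega) (hpos t e) (by linarith) ht
    have h2 := htel e t
    rw [div_le_iff₀ (by positivity)]
    linarith
  have hcard : (F.card : ℝ) * ((x-1)/(2*(p:ℝ))) ≤ ∑ e ∈ F, c e := by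
    calc (F.card : ℝ) * ((x-1)/(2*(p:ℝ))) = ∑ _e ∈ F, ((x-1)/(2*(p:ℝ))) := by
          rw [Finset.sum_const, nsmul_eq_mul]
      _ ≤ ∑ e ∈ F, c e := Finset.sum_le_sum hheavy
  have hFsub : ∑ e ∈ F, c e ≤ ∑ e, c e :=
    Finset.sum_le_sum_of_subset_of_nonneg (Finset.subset_univ F) (fun e _ _ => hc_nonneg e)
  have hT50 : (F.card : ℝ) * (x - 1) ≤ T/50 := by
    have hchain := hcard.trans (hFsub.trans htot)
    have h2p : (0:ℝ) < 2*(p:ℝ) := by positivity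
    have h1 : (F.card : ℝ) * ((x-1)/(2*(p:ℝ))) * (2*(p:ℝ)) = F.card * (x-1) := by
      field_simp
    have h2 : (T:ℝ) * (1/(100*(p:ℝ))) * (2*(p:ℝ)) = T/50 := by
      field_simp; ring
    have := mul_le_mul_of_nonneg_right hchain h2p.le
    linarith
  have hFc0 : (0:ℝ) ≤ (F.card : ℝ) := Nat.cast_nonneg _
  have hgoal : (F.card : ℝ) * x ≤ T := by
    nlinarith [mul_nonneg hFc0 (by linarith : (0:ℝ) ≤ 49*x - 50)]
  have hxpos : (0:ℝ) < x := by linarith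
  have hrw : K ^ (-(p:ℝ)/((p:ℝ)+1)) = x⁻¹ := by
    rw [hxdef, ← Real.rpow_neg hK0.le]
    congr 1; ring
  rw [hrw, ← div_eq_mul_inv, le_div_iff₀ hxpos]
  exact hgoal
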